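/- Let G be a finite simple graph of order n and maximum degree Δ, and let k be an integer with -Δ ≤ k ≤ Δ. If G contains a global defensive k-alliance, then γ_k^d(G) ≥ ⌈ n / (⌊(Δ-k)/2⌋ + 1) ⌉. -/

import Mathlib

open Finset

variable {V : Type*}

/-- `degIn G S v` is the number of neighbors that `v` has in `S` (denoted `δ_S(v)`). -/
def degIn [Fintype V] [DecidableEq V] (G : SimpleGraph V) [DecidableRel G.Adj]
    (S : Finset V) (v : V) : ℕ :=
  (G.neighborFinset v ∩ S).card

/-- A nonempty set `S` is a defensive `k`-alliance in `G` if every vertex of `S` has at least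
`k` more neighbors inside `S` than outside. -/
def IsDefensiveKAlliance [Fintype V] [DecidableEq V] (G : SimpleGraph V) [DecidableRel G.Adj]
    (k : ℤ) (S : Finset V) : Prop :=
  S.Nonempty ∧ ∀ v ∈ S, (degIn G Sᶜ v : ℤ) + k ≤ (degIn G S v : ℤ)

/-- The defensive `k`-alliance number: minimum cardinality of a defensive `k`-alliance. -/
noncomputable def defensiveAllianceNum [Fintype V] [DecidableEq V] (G : SimpleGraph V)
    [DecidableRel G.Adj] (k : ℤ) : ℕ :=
  sInf {m : ℕ | ∃ S : Finset V, IsDefensiveKAlliance G k S ∧ S.card = m}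

/-- `S` is a dominating set: every vertex outside `S` has a neighbor in `S`. -/
def IsDominatingSet (G : SimpleGraph V) (S : Finset V) : Prop :=
  ∀ v, v ∉ S → ∃ u ∈ S, G.Adj u v

/-- A global defensive `k`-alliance is a defensive `k`-alliance which is also dominating. -/
def IsGlobalDefensiveKAlliance [Fintype V] [DecidableEq V] (G : SimpleGraph V)
    [DecidableRel G.Adj] (k : ℤ) (S : Finset V) : Prop :=
  IsDefensiveKAlliance G k S ∧ IsDominatingSet G S

/-- The global defensive `k`-alliance number `γ_k^d(G)`. -/
noncomputable def globalDefensiveAllianceNum [Fintype V] [DecidableEq V] (G : SimpleGraph V)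
    [DecidableRel G.Adj] (k : ℤ) : ℕ :=
  sInf {m : ℕ | ∃ S : Finset V, IsGlobalDefensiveKAlliance G k S ∧ S.card = m}

/-! Let `S` be a minimum global defensive `k`-alliance. Each `v ∈ S` has
`δ_S(v) + δ_{V∖S}(v) = deg v ≤ Δ` and `δ_{V∖S}(v) + k ≤ δ_S(v)`, so `δ_{V∖S}(v) ≤ ⌊(Δ - k)/2⌋`.
Since `S` dominates, every vertex outside `S` has a neighbour in `S`; double counting the edges
between `S` and `V ∖ S` gives `n - |S| ≤ |S| ⌊(Δ - k)/2⌋`. -/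

section

variable [Fintype V] [DecidableEq V] {G : SimpleGraph V} [DecidableRel G.Adj]

theorem degIn_add_degIn_compl (S : Finset V) (v : V) :
    degIn G S v + degIn G Sᶜ v = G.degree v := by
  rw [degIn, degIn, ← sdiff_eq_inter_compl, card_inter_add_card_sdiff,
    G.card_neighborFinset_eq_degree]

theorem sum_degIn_comm (S T : Finset V) :
    ∑ v ∈ S, degIn G T v = ∑ u ∈ T, degIn G S u := by
  have neighbors_eq (A : Finset V) (v : V) : G.neighborFinset v ∩ A = {a ∈ A | G.Adj v a} := by
    ext
    simp [and_comm]
  have degIn_eq_above (A : Finset V) (v : V) : degIn G A v = #(A.bipartiteAbove G.Adj v) :=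
    congrArg card (neighbors_eq A v)
  have degIn_eq_below (A : Finset V) (v : V) : degIn G A v = #(A.bipartiteBelow G.Adj v) := by
    simp only [degIn, neighbors_eq, bipartiteBelow, G.adj_comm]
  simp only [degIn_eq_above T, sum_card_bipartiteAbove_eq_sum_card_bipartiteBelow,
    ← degIn_eq_below]

theorem IsDominatingSet.card_compl_le_sum_degIn {S : Finset V} (hS : IsDominatingSet G S) :
    #Sᶜ ≤ ∑ u ∈ Sᶜ, degIn G S u := by
  rw [card_eq_sum_ones]
  refine sum_le_sum fun u hu => card_pos.2 ?_
  obtain ⟨w, hwS, hwu⟩ := hS u (mem_compl.1 hu)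
  exact ⟨w, mem_inter.2 ⟨G.mem_neighborFinset _ _ |>.2 hwu.symm, hwS⟩⟩

theorem IsDefensiveKAlliance.degIn_compl_le {k : ℤ} {S : Finset V}
    (hS : IsDefensiveKAlliance G k S) {v : V} (hv : v ∈ S) :
    (degIn G Sᶜ v : ℤ) ≤ ((G.maxDegree : ℤ) - k) / 2 := by
  have hsplit := degIn_add_degIn_compl (G := G) S v
  have hΔ := G.degree_le_maxDegree v
  have hdefend := hS.2 v hv
  omega

theorem IsGlobalDefensiveKAlliance.card_le_card_mul {k : ℤ} {S : Finset V}
    (hS : IsGlobalDefensiveKAlliance G k S) :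
    (Fintype.card V : ℤ) ≤ #S * (((G.maxDegree : ℤ) - k) / 2 + 1) :=
  calc (Fintype.card V : ℤ) = #S + #Sᶜ := by
        exact_mod_cast (card_add_card_compl S).symm
    _ ≤ #S + ∑ v ∈ S, (degIn G Sᶜ v : ℤ) := by
      rw [← Nat.cast_sum, sum_degIn_comm]
      gcongr
      exact_mod_cast hS.2.card_compl_le_sum_degIn
    _ ≤ #S + ∑ _v ∈ S, ((G.maxDegree : ℤ) - k) / 2 := by
      gcongr with v hv
      exact hS.1.degIn_compl_le hv
    _ = #S * (((G.maxDegree : ℤ) - k) / 2 + 1) := by rw [sum_const, nsmul_eq_mul]; ring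

theorem exists_isGlobalDefensiveKAlliance_card_eq {k : ℤ}
    (hex : ∃ S : Finset V, IsGlobalDefensiveKAlliance G k S) :
    ∃ S : Finset V, IsGlobalDefensiveKAlliance G k S ∧ #S = globalDefensiveAllianceNum G k :=
  let ⟨S, hS⟩ := hex
  Nat.sInf_mem (s := {m | ∃ S, IsGlobalDefensiveKAlliance G k S ∧ #S = m}) ⟨#S, S, hS, rfl⟩

end

theorem globalDefensiveAllianceNum_lower_bound_general [Fintype V] [DecidableEq V]
    (G : SimpleGraph V) [DecidableRel G.Adj] (k : ℤ)
    (hex : ∃ S : Finset V, IsGlobalDefensiveKAlliance G k S) :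
    ⌈(Fintype.card V : ℚ) / (((⌊((G.maxDegree : ℚ) - (k : ℚ)) / 2⌋ : ℤ) : ℚ) + 1)⌉ ≤
      (globalDefensiveAllianceNum G k : ℤ) := by
  obtain ⟨S, hS, hcard⟩ := exists_isGlobalDefensiveKAlliance_card_eq hex
  have hfloor : ⌊((G.maxDegree : ℚ) - (k : ℚ)) / 2⌋ = ((G.maxDegree : ℤ) - k) / 2 := by
    exact_mod_cast Rat.floor_intCast_div_natCast ((G.maxDegree : ℤ) - k) 2
  have hpos : 0 < ((G.maxDegree : ℤ) - k) / 2 + 1 := by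
    obtain ⟨v, hv⟩ := hS.1.1
    have hv_bound := hS.1.degIn_compl_le hv
    omega
  rw [hfloor, Int.ceil_le, div_le_iff₀ (by exact_mod_cast hpos), ← hcard]
  exact_mod_cast hS.card_le_card_mul

/-- Theorem: for `-Δ ≤ k ≤ Δ`, if `G` contains a global defensive `k`-alliance then
`γ_k^d(G) ≥ ⌈ n / (⌊(Δ-k)/2⌋ + 1) ⌉`. -/
theorem globalDefensiveAllianceNum_lower_bound [Fintype V] [DecidableEq V]
    (G : SimpleGraph V) [DecidableRel G.Adj] (k : ℤ)
    (hk1 : -(G.maxDegree : ℤ) ≤ k) (hk2 : k ≤ (G.maxDegree : ℤ))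
    (hex : ∃ S : Finset V, IsGlobalDefensiveKAlliance G k S) :
    ⌈(Fintype.card V : ℚ) / (((⌊((G.maxDegree : ℚ) - (k : ℚ)) / 2⌋ : ℤ) : ℚ) + 1)⌉ ≤
      (globalDefensiveAllianceNum G k : ℤ) :=
  globalDefensiveAllianceNum_lower_bound_general G k hex
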